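/- Let p : E → B be a fibration (a map with the homotopy lifting property) over a path-connected space B. If B is a Dold space and the fiber F = p⁻¹(b₀) over some point b₀ ∈ B is a Dold space, then the total space E is a Dold space. -/

import Mathlib

open unitInterval

universe u v w

/-- A partition of unity: continuous `[0,1]`-valued maps whose pointwise sum is `1`. -/
def IsPartitionOfUnity {ι : Type*} {X : Type*} [TopologicalSpace X]
    (f : ι → X → ℝ) : Prop :=
  (∀ i, Continuous (f i)) ∧ (∀ i x, f i x ∈ Set.Icc (0 : ℝ) 1) ∧
    ∀ x, HasSum (fun i => f i x) 1

/-- A cover is numerable if it admits a subordinate partition of unity with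
locally finite supports. -/
def IsNumerableCover {ι : Type*} {X : Type*} [TopologicalSpace X]
    (U : ι → Set X) : Prop :=
  ∃ f : ι → X → ℝ, IsPartitionOfUnity f ∧
    LocallyFinite (fun i => closure (Function.support (f i))) ∧
    ∀ i, closure (Function.support (f i)) ⊆ U i

/-- `U` is ambiently contractible to `x₀`: the inclusion `U → X` is homotopic to the
constant map at `x₀`. -/
def AmbientlyContractibleTo {X : Type*} [TopologicalSpace X] (U : Set X) (x₀ : X) : Prop :=
  ContinuousMap.Homotopic
    (⟨Subtype.val, continuous_subtype_val⟩ : C(U, X))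
    (ContinuousMap.const ↥U x₀)

/-- `U ⊆ X` is ambiently contractible: the inclusion `U → X` is nullhomotopic. -/
def AmbientlyContractible {X : Type*} [TopologicalSpace X] (U : Set X) : Prop :=
  ∃ x₀ : X, AmbientlyContractibleTo U x₀

/-- A Dold space (numerably contractible space): a space admitting a numerable cover
by ambiently contractible subsets. -/
def IsDoldSpace (X : Type u) [TopologicalSpace X] : Prop :=
  ∃ (ι : Type u) (U : ι → Set X),
    (∀ x, ∃ i, x ∈ U i) ∧ IsNumerableCover U ∧ ∀ i, AmbientlyContractible (U i)

/-- A map has the homotopy lifting property with respect to all spaces (is a Hurewicz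
fibration). -/
def IsFibration {E B : Type*} [TopologicalSpace E] [TopologicalSpace B] (p : C(E, B)) : Prop :=
  ∀ (Z : Type*) [TopologicalSpace Z] (H : C(Z × unitInterval, B)) (h₀ : C(Z, E)),
    (∀ z, p (h₀ z) = H (z, 0)) →
      ∃ H' : C(Z × unitInterval, E),
        (∀ z, H' (z, 0) = h₀ z) ∧ ∀ w, p (H' w) = H w

/-!
Over a contractible set `U` of the base, the inclusion of `p⁻¹ U` into `E` is homotopic to a
map `q_U : p⁻¹ U → F` into the fibre: lift a contraction of `U`, then a path to `b₀`. If the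
`U_i` form a numerable contractible cover of `B` and the `W_j` one of `F`, the sets
`q_{U_i}⁻¹ W_j` cover `E`, each is ambiently contractible because its inclusion factors up to
homotopy through `W_j`, and `(f_i ∘ p) · (φ_j ∘ q_{U_i})` is a locally finite partition of unity
subordinate to them.
-/

open Set Filter Topology

abbrev ContinuousMap.subtypeVal {X : Type*} [TopologicalSpace X] (s : Set X) : C(s, X) :=
  ⟨Subtype.val, continuous_subtype_val⟩

section LocallyFinite

variable {ι κ X : Type*} [TopologicalSpace X]

theorem LocallyFinite.prod_of_subset {S : ι → Set X} {A : ι × κ → Set X}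
    (hS : LocallyFinite S) (hA : ∀ i, LocallyFinite fun j => A (i, j))
    (hAS : ∀ i j, A (i, j) ⊆ S i) : LocallyFinite A := by
  intro x
  obtain ⟨N, hN, hNfin⟩ := hS x
  choose V hV hVfin using fun i => hA i x
  refine ⟨N ∩ ⋂ i ∈ {i | (S i ∩ N).Nonempty}, V i,
    inter_mem hN ((biInter_mem hNfin).2 fun i _ => hV i), ?_⟩
  refine (hNfin.biUnion fun i _ => (hVfin i).image (Prod.mk i)).subset ?_
  rintro ⟨i, j⟩ ⟨y, hyA, hyN, hyV⟩
  have hi : (S i ∩ N).Nonempty := ⟨y, hAS i j hyA, hyN⟩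
  exact mem_biUnion hi ⟨j, ⟨y, hyA, mem_iInter₂.1 hyV i hi⟩, rfl⟩

theorem LocallyFinite.inter_image_val {s K : Set X} (hK : IsClosed K) (hKs : K ⊆ s)
    {F : ι → Set s} (hF : LocallyFinite F) : LocallyFinite fun i => K ∩ Subtype.val '' F i := by
  intro x
  by_cases hx : x ∈ K
  · obtain ⟨M, hM, hMfin⟩ := hF ⟨x, hKs hx⟩
    obtain ⟨V, hV, hVM⟩ := (mem_nhds_subtype _ _ _).1 hM
    refine ⟨V, hV, hMfin.subset ?_⟩
    rintro i ⟨_, ⟨-, z, hz, rfl⟩, hzV⟩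
    exact ⟨z, hz, hVM hzV⟩
  · exact ⟨Kᶜ, hK.isOpen_compl.mem_nhds hx,
      finite_empty.subset fun i ⟨_, ⟨hyK, _⟩, hyc⟩ => hyc hyK⟩

end LocallyFinite

theorem continuous_of_nonneg_of_le {X : Type*} [TopologicalSpace X] {g h : X → ℝ}
    (hg : Continuous g) (h0 : 0 ≤ h) (hle : h ≤ g) (hh : ∀ x, g x ≠ 0 → ContinuousAt h x) :
    Continuous h := by
  refine continuous_iff_continuousAt.2 fun x => ?_
  by_cases hx : g x = 0
  · have hx' : h x = 0 := le_antisymm (hx ▸ hle x) (h0 x)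
    unfold ContinuousAt
    rw [hx']
    exact squeeze_zero h0 hle (hx ▸ hg.tendsto x)
  · exact hh x hx

theorem IsNumerableCover.preimage {ι X B : Type*} [TopologicalSpace X] [TopologicalSpace B]
    {U : ι → Set B} (hU : IsNumerableCover U) (p : C(X, B)) :
    IsNumerableCover fun i => p ⁻¹' U i := by
  obtain ⟨f, ⟨hfc, hf01, hfsum⟩, hflf, hfU⟩ := hU
  have hsupp : ∀ i, tsupport (f i ∘ p) ⊆ p ⁻¹' tsupport (f i) := fun i =>
    tsupport_comp_subset_preimage _ p.continuous
  exact ⟨fun i => f i ∘ p, ⟨fun i => (hfc i).comp p.continuous, fun i x => hf01 i (p x),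
    fun x => hfsum (p x)⟩, (hflf.preimage_continuous p.continuous).subset hsupp,
    fun i => (hsupp i).trans (preimage_mono (hfU i))⟩

section ProdPartition

variable {ι κ X Y : Type*} [TopologicalSpace X] [TopologicalSpace Y]
  {T : ι → Set X} {f : ι → X → ℝ} {q : ∀ i, C(T i, Y)} {φ : κ → Y → ℝ}

open Classical in
noncomputable def prodPartition (T : ι → Set X) (f : ι → X → ℝ) (q : ∀ i, C(T i, Y))
    (φ : κ → Y → ℝ) (ij : ι × κ) (x : X) : ℝ :=
  if hx : x ∈ T ij.1 then f ij.1 x * φ ij.2 (q ij.1 ⟨x, hx⟩) else 0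

theorem prodPartition_of_mem {i : ι} {x : X} (hx : x ∈ T i) (j : κ) :
    prodPartition T f q φ (i, j) x = f i x * φ j (q i ⟨x, hx⟩) :=
  dif_pos hx

theorem prodPartition_of_not_mem {i : ι} {x : X} (hx : x ∉ T i) (j : κ) :
    prodPartition T f q φ (i, j) x = 0 :=
  dif_neg hx

theorem prodPartition_mem_Icc (hf : IsPartitionOfUnity f) (hφ : IsPartitionOfUnity φ)
    (ij : ι × κ) (x : X) :
    prodPartition T f q φ ij x ∈ Icc 0 (f ij.1 x) := by
  obtain ⟨i, j⟩ := ij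
  by_cases hx : x ∈ T i
  · obtain ⟨hf0, -⟩ := hf.2.1 i x
    obtain ⟨hφ0, hφ1⟩ := hφ.2.1 j (q i ⟨x, hx⟩)
    rw [prodPartition_of_mem hx]
    exact ⟨mul_nonneg hf0 hφ0, mul_le_of_le_one_right hf0 hφ1⟩
  · rw [prodPartition_of_not_mem hx]
    exact ⟨le_rfl, (hf.2.1 i x).1⟩

theorem hasSum_prodPartition_fiber (hfT : ∀ i, tsupport (f i) ⊆ T i)
    (hφ : IsPartitionOfUnity φ) (i : ι) (x : X) :
    HasSum (fun j => prodPartition T f q φ (i, j) x) (f i x) := by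
  by_cases hx : x ∈ T i
  · simpa only [prodPartition_of_mem hx, mul_one] using
      (hφ.2.2 (q i ⟨x, hx⟩)).mul_left (f i x)
  · have hfx : f i x = 0 := image_eq_zero_of_notMem_tsupport fun h => hx (hfT i h)
    simpa only [prodPartition_of_not_mem hx, hfx] using hasSum_zero

theorem hasSum_prodPartition (hf : IsPartitionOfUnity f) (hfT : ∀ i, tsupport (f i) ⊆ T i)
    (hφ : IsPartitionOfUnity φ) (x : X) :
    HasSum (fun ij => prodPartition T f q φ ij x) 1 := by
  have hfiber i := hasSum_prodPartition_fiber (q := q) hfT hφ i x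
  have hnonneg : 0 ≤ fun ij => prodPartition T f q φ ij x := fun ij =>
    (prodPartition_mem_Icc hf hφ ij x).1
  have hsummable : Summable fun ij => prodPartition T f q φ ij x := by
    rw [summable_prod_of_nonneg hnonneg]
    refine ⟨fun i => (hfiber i).summable, ?_⟩
    rw [funext fun i => (hfiber i).tsum_eq]
    exact (hf.2.2 x).summable
  obtain ⟨s, hs⟩ := hsummable
  rwa [(hs.prod_fiberwise hfiber).unique (hf.2.2 x)] at hs

theorem continuous_prodPartition (hf : IsPartitionOfUnity f) (hfT : ∀ i, tsupport (f i) ⊆ T i)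
    (hφ : IsPartitionOfUnity φ) (ij : ι × κ) : Continuous (prodPartition T f q φ ij) := by
  obtain ⟨i, j⟩ := ij
  refine continuous_of_nonneg_of_le (hf.1 i) (fun x => (prodPartition_mem_Icc hf hφ _ x).1)
    (fun x => (prodPartition_mem_Icc hf hφ _ x).2) fun x hx => ?_
  have hTx : T i ∈ 𝓝 x :=
    mem_of_superset ((isOpen_ne_fun (hf.1 i) continuous_const).mem_nhds hx)
      (subset_tsupport (f i) |>.trans (hfT i))
  refine ContinuousOn.continuousAt ?_ hTx
  rw [continuousOn_iff_continuous_domRestrict]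
  have hrestrict : (T i).domRestrict (prodPartition T f q φ (i, j)) =
      fun z : T i => f i z * φ j (q i z) := funext fun z => prodPartition_of_mem z.2 j
  rw [hrestrict]
  exact ((hf.1 i).comp continuous_subtype_val).mul ((hφ.1 j).comp (q i).continuous)

theorem tsupport_prodPartition_subset (hfT : ∀ i, tsupport (f i) ⊆ T i) (i : ι) (j : κ) :
    tsupport (prodPartition T f q φ (i, j)) ⊆
      tsupport (f i) ∩ Subtype.val '' (q i ⁻¹' tsupport (φ j)) := by
  have hsupp : Function.support (prodPartition T f q φ (i, j)) ⊆ Function.support (f i) :=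
    fun x hx hfx => hx <| by
      by_cases hxT : x ∈ T i
      · rw [prodPartition_of_mem hxT, hfx, zero_mul]
      · exact prodPartition_of_not_mem hxT j
  intro x hx
  have hxf : x ∈ tsupport (f i) := closure_mono hsupp hx
  refine ⟨hxf, ⟨x, hfT i hxf⟩, ?_, rfl⟩
  have hsub : Subtype.val ⁻¹' Function.support (prodPartition T f q φ (i, j)) ⊆
      q i ⁻¹' Function.support (φ j) := fun z hz hφz => hz <| by
    rw [prodPartition_of_mem z.2, hφz, mul_zero]
  refine (q i).continuous.closure_preimage_subset _ (closure_mono hsub ?_)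
  rw [closure_subtype, Subtype.image_preimage_coe,
    inter_eq_self_of_subset_right (hsupp.trans ((subset_tsupport _).trans (hfT i)))]
  exact hx

theorem locallyFinite_tsupport_prodPartition (hf_lf : LocallyFinite fun i => tsupport (f i))
    (hfT : ∀ i, tsupport (f i) ⊆ T i) (hφ_lf : LocallyFinite fun j => tsupport (φ j)) :
    LocallyFinite fun ij => tsupport (prodPartition T f q φ ij) :=
  hf_lf.prod_of_subset
    (fun i => ((hφ_lf.preimage_continuous (q i).continuous).inter_image_val
      (isClosed_tsupport (f i)) (hfT i)).subset (tsupport_prodPartition_subset hfT i))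
    fun i j => (tsupport_prodPartition_subset hfT i j).trans inter_subset_left

theorem IsNumerableCover.image_preimage_prod (hT : IsNumerableCover T) (q : ∀ i, C(T i, Y))
    {W : κ → Set Y} (hW : IsNumerableCover W) :
    IsNumerableCover fun ij : ι × κ => Subtype.val '' (q ij.1 ⁻¹' W ij.2) := by
  obtain ⟨f, hf, hf_lf, hfT⟩ := hT
  obtain ⟨φ, hφ, hφ_lf, hφW⟩ := hW
  refine ⟨prodPartition T f q φ, ⟨continuous_prodPartition hf hfT hφ,
    fun ij x => ⟨(prodPartition_mem_Icc hf hφ ij x).1,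
      (prodPartition_mem_Icc hf hφ ij x).2.trans (hf.2.1 ij.1 x).2⟩,
    hasSum_prodPartition hf hfT hφ⟩, locallyFinite_tsupport_prodPartition hf_lf hfT hφ_lf,
    fun ⟨i, j⟩ => (tsupport_prodPartition_subset hfT i j).trans ?_⟩
  exact inter_subset_right.trans (image_mono (preimage_mono (hφW j)))

end ProdPartition

section Contractible

variable {X Y : Type*} [TopologicalSpace X] [TopologicalSpace Y]

theorem AmbientlyContractible.of_homotopic_comp {A : Set X} {W : Set Y}
    (hW : AmbientlyContractible W) (k : C(Y, X)) (g : C(A, W))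
    (h : (ContinuousMap.subtypeVal A).Homotopic (k.comp ((ContinuousMap.subtypeVal W).comp g))) :
    AmbientlyContractible A :=
  have hW' : (ContinuousMap.subtypeVal W).Nullhomotopic := hW
  let ⟨x, hx⟩ := (hW'.comp_left g).comp_right k
  ⟨x, h.trans hx⟩

theorem AmbientlyContractible.image_preimage {T : Set X} (q : C(T, Y)) (k : C(Y, X))
    (hq : (ContinuousMap.subtypeVal T).Homotopic (k.comp q)) {W : Set Y}
    (hW : AmbientlyContractible W) : AmbientlyContractible (Subtype.val '' (q ⁻¹' W)) := by
  let r := ContinuousMap.inclusion (Subtype.coe_image_subset T (q ⁻¹' W))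
  have hrW : ∀ a, q (r a) ∈ W := by
    rintro ⟨_, z, hz, rfl⟩
    exact hz
  exact hW.of_homotopic_comp k ⟨fun a => ⟨q (r a), hrW a⟩, by fun_prop⟩ (hq.comp (.refl r))

end Contractible

section Fibration

variable {E : Type u} {B : Type v} [TopologicalSpace E] [TopologicalSpace B] {p : C(E, B)}

theorem IsFibration.exists_homotopic_comp_fiber {Z : Type w} [TopologicalSpace Z]
    (hp : IsFibration.{u, v, w} p) (g : C(Z, E)) {b : B}
    (hg : (p.comp g).Homotopic (ContinuousMap.const Z b)) :
    ∃ g' : C(Z, p ⁻¹' {b}), g.Homotopic ((ContinuousMap.subtypeVal _).comp g') := by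
  obtain ⟨H⟩ := hg
  obtain ⟨H', hH'0, hH'p⟩ :=
    hp Z (H.toContinuousMap.comp .prodSwap) g fun z => by simp
  have hfiber : ∀ z, H' (z, 1) ∈ p ⁻¹' {b} := fun z => by simp [hH'p]
  exact ⟨⟨fun z => ⟨H' (z, 1), hfiber z⟩, by fun_prop⟩,
    ⟨{ toContinuousMap := H'.comp .prodSwap
       map_zero_left := hH'0
       map_one_left := fun _ => rfl }⟩⟩

theorem AmbientlyContractible.exists_homotopic_preimage_to_fiber [PathConnectedSpace B]
    (hp : IsFibration.{u, v, u} p) {U : Set B} (hU : AmbientlyContractible U) (b₀ : B) :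
    ∃ q : C(p ⁻¹' U, p ⁻¹' {b₀}),
      (ContinuousMap.subtypeVal _).Homotopic ((ContinuousMap.subtypeVal _).comp q) := by
  obtain ⟨b₁, hb₁⟩ := hU
  refine hp.exists_homotopic_comp_fiber _ ?_
  have hcontract : (p.comp (ContinuousMap.subtypeVal (p ⁻¹' U))).Homotopic
      (ContinuousMap.const _ b₁) :=
    hb₁.comp (.refl (p.restrictPreimage U))
  exact hcontract.trans ⟨(PathConnectedSpace.somePath b₁ b₀).toHomotopyConst⟩

end Fibration

/-- if `p : E → B` is a fibration over a path-connected Dold space with a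
Dold fiber, then `E` is a Dold space. -/
theorem stmt14 {E B : Type u} [TopologicalSpace E] [TopologicalSpace B]
    (p : C(E, B)) (hp : IsFibration.{u, u, u} p)
    [PathConnectedSpace B] (hB : IsDoldSpace B)
    (b₀ : B) (hF : IsDoldSpace (p ⁻¹' {b₀} : Set E)) :
    IsDoldSpace E := by
  obtain ⟨ιB, U, hUcov, hU, hUc⟩ := hB
  obtain ⟨ιF, W, hWcov, hW, hWc⟩ := hF
  choose q hq using fun i => (hUc i).exists_homotopic_preimage_to_fiber hp b₀
  refine ⟨ιB × ιF, fun ij => Subtype.val '' (q ij.1 ⁻¹' W ij.2), fun x => ?_,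
    (hU.preimage p).image_preimage_prod q hW,
    fun ij => AmbientlyContractible.image_preimage (q ij.1) _ (hq ij.1) (hWc ij.2)⟩
  obtain ⟨i, hi⟩ := hUcov (p x)
  obtain ⟨j, hj⟩ := hWcov (q i ⟨x, hi⟩)
  exact ⟨(i, j), ⟨x, hi⟩, hj, rfl⟩
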